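/- arXiv:2601.07299 — 4 statements merged into one kernel-verified Lean document; each statement's English description precedes it below -/
import Mathlib

section
/- Let M₀ ∈ ℝ, σ > 0 and λ > 0. The Cauchy distribution C(M₀, λ) overbounds the centrally-aligned Gaussian distribution N(M₀, σ) — that is, F_G(x; M₀, σ) ≤ F_C(x; M₀, λ) for all x ≤ M₀ and F_G(x; M₀, σ) ≥ F_C(x; M₀, λ) for all x > M₀ — if and only if λ ≥ √(2/π)·σ. -/
/-!
On `[M₀, ∞)` the difference `H = F_G - F_C` vanishes at `M₀` and at `+∞`, and its derivative
`f_G - f_C` has the sign of `f_G(M₀) (1 + t) e^{-b t} - f_C(M₀)`, where `t = ((x - M₀)/λ)²` and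
`b = λ²/(2σ²)`. The factor `(1 + t) e^{-b t}` first increases and then decreases, so once
`f_C(M₀) ≤ f_G(M₀)` the set where `H' ≥ 0` is an initial segment of `[M₀, ∞)`, and `H`, being `0`
at both ends, stays `≥ 0`; the half line `x ≤ M₀` follows by symmetry about `M₀`.
Conversely, `H ≥ 0` to the right of `M₀` forces `H'(M₀) ≥ 0`. Finally `f_C(M₀) = 1/(πλ) ≤ 1/(σ√(2π)) = f_G(M₀)` is exactly `λ ≥ √(2/π) σ`.
-/

/-- Gaussian PDF with location `μ` and scale `σ`. -/
noncomputable def gaussPDF (μ σ x : ℝ) : ℝ :=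
  (1 / (σ * Real.sqrt (2 * Real.pi))) * Real.exp (-(x - μ) ^ 2 / (2 * σ ^ 2))

/-- Gaussian CDF with location `μ` and scale `σ`. -/
noncomputable def gaussCDF (μ σ x : ℝ) : ℝ :=
  ∫ t in Set.Iic x, gaussPDF μ σ t

/-- Cauchy CDF with location `m` and scale `lam`. -/
noncomputable def cauchyCDF (m lam x : ℝ) : ℝ :=
  1 / 2 + (1 / Real.pi) * Real.arctan ((x - m) / lam)

open MeasureTheory ProbabilityTheory Set Filter Topology Real
open scoped NNReal

theorem min_le_of_hasDerivAt_of_deriv_nonneg_imp {f f' : ℝ → ℝ} {a b x : ℝ}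
    (hf : ∀ y ∈ Icc a b, HasDerivAt f (f' y) y)
    (hf' : ∀ y ∈ Icc a b, ∀ z ∈ Icc a b, y ≤ z → 0 ≤ f' z → 0 ≤ f' y)
    (hx : x ∈ Icc a b) : min (f a) (f b) ≤ f x := by
  have hcont {s : Set ℝ} (hs : s ⊆ Icc a b) : ContinuousOn f s := fun y hy =>
    (hf y (hs hy)).continuousAt.continuousWithinAt
  have hderiv {s : Set ℝ} (hs : s ⊆ Icc a b) (y) (hy : y ∈ interior s) :
      HasDerivWithinAt f (f' y) (interior s) y :=
    (hf y (hs (interior_subset hy))).hasDerivWithinAt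
  by_cases hinc : ∀ y ∈ Ioo a x, 0 ≤ f' y
  · have hsub : Icc a x ⊆ Icc a b := Icc_subset_Icc_right hx.2
    have := monotoneOn_of_hasDerivWithinAt_nonneg (convex_Icc a x) (hcont hsub)
      (hderiv hsub) (by simpa using hinc) (left_mem_Icc.2 hx.1) (right_mem_Icc.2 hx.1) hx.1
    exact min_le_of_left_le this
  · push Not at hinc
    obtain ⟨y, hy, hy'⟩ := hinc
    have hsub : Icc x b ⊆ Icc a b := Icc_subset_Icc_left hx.1
    have hdec : ∀ z ∈ interior (Icc x b), f' z ≤ 0 := by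
      rw [interior_Icc]
      refine fun z hz => le_of_not_ge fun hz' => hy'.not_ge ?_
      exact hf' y (Ioo_subset_Icc_self (Ioo_subset_Ioo_right hx.2 hy))
        z (hsub (Ioo_subset_Icc_self hz)) (hy.2.le.trans hz.1.le) hz'
    have := antitoneOn_of_hasDerivWithinAt_nonpos (convex_Icc x b) (hcont hsub)
      (hderiv hsub) hdec (left_mem_Icc.2 hx.2) (right_mem_Icc.2 hx.2) hx.2
    exact min_le_of_right_le this

theorem HasDerivAt.nonneg_of_forall_lt_le {f : ℝ → ℝ} {f' a : ℝ} (hf : HasDerivAt f f' a)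
    (h : ∀ x > a, f a ≤ f x) : 0 ≤ f' := by
  have hmin : IsLocalMinOn f (Ici a) a := by
    refine eventually_of_mem self_mem_nhdsWithin fun x hx => ?_
    rcases (mem_Ici.1 hx).eq_or_lt with rfl | hax
    exacts [le_rfl, h x hax]
  have hsegment : segment ℝ a (a + 1) ⊆ Ici a := by
    simpa [segment_eq_Icc] using Icc_subset_Ici_self
  simpa using hmin.hasFDerivWithinAt_nonneg hf.hasDerivWithinAt.hasFDerivWithinAt
    (y := 1) (mem_posTangentConeAt_of_segment_subset hsegment)

theorem hasDerivAt_setIntegral_Iic {f : ℝ → ℝ} (hf : Integrable f) {x : ℝ}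
    (hfx : ContinuousAt f x) : HasDerivAt (fun y => ∫ t in Iic y, f t) (f x) x := by
  have hsplit : (fun y => ∫ t in Iic y, f t) =
      fun y => (∫ t in (0 : ℝ)..y, f t) + ∫ t in Iic 0, f t := by
    ext y
    rw [intervalIntegral.integral_Iic_sub_Iic hf.integrableOn hf.integrableOn |>.symm]
    ring
  rw [hsplit]
  exact (intervalIntegral.integral_hasDerivAt_right hf.intervalIntegrable
    hf.aestronglyMeasurable.stronglyMeasurableAtFilter hfx).add_const _

theorem cdf_sub_eq_one_sub_cdf_add {P : Measure ℝ} [IsProbabilityMeasure P]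
    [NullSingletonClass P] {m : ℝ} (hP : P.map (2 * m - ·) = P) (u : ℝ) :
    cdf P (m - u) = 1 - cdf P (m + u) := by
  have hrefl : P (Iic (m - u)) = P (Ici (m + u)) := by
    conv_lhs => rw [← hP]
    rw [Measure.map_apply (by fun_prop) measurableSet_Iic]
    congr 1
    ext x
    simp only [mem_preimage, mem_Iic, mem_Ici]
    constructor <;> intro <;> linarith
  rw [cdf_eq_real, cdf_eq_real, measureReal_def, hrefl, ← compl_Iio,
    prob_compl_eq_one_sub measurableSet_Iio, measure_congr Iio_ae_eq_Iic,
    ENNReal.toReal_sub_of_le prob_le_one ENNReal.one_ne_top]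
  simp [measureReal_def]

theorem gaussPDF_eq_mul_exp (μ σ x : ℝ) :
    gaussPDF μ σ x = gaussPDF μ σ μ * exp (-(x - μ) ^ 2 / (2 * σ ^ 2)) := by
  simp [gaussPDF]

section Gaussian

variable (μ : ℝ) {σ : ℝ} (hσ : 0 < σ)
include hσ

theorem gaussPDF_eq_gaussianPDFReal : gaussPDF μ σ = gaussianPDFReal μ (σ ^ 2).toNNReal := by
  ext x
  have hsqrt : √(2 * π * σ ^ 2) = σ * √(2 * π) := by
    rw [sqrt_mul' _ (sq_nonneg σ), sqrt_sq hσ.le, mul_comm]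
  simp only [gaussianPDFReal_def, gaussPDF, one_div, Real.coe_toNNReal _ (sq_nonneg σ), hsqrt]

theorem gaussCDF_eq_cdf : gaussCDF μ σ = cdf (gaussianReal μ (σ ^ 2).toNNReal) := by
  have hv : (σ ^ 2).toNNReal ≠ 0 := by simp [hσ.ne']
  ext x
  rw [cdf_eq_real, measureReal_def, gaussianReal_apply_eq_integral μ hv,
    ENNReal.toReal_ofReal
      (setIntegral_nonneg measurableSet_Iic fun _ _ => gaussianPDFReal_nonneg ..),
    gaussCDF, gaussPDF_eq_gaussianPDFReal μ hσ]

theorem hasDerivAt_gaussCDF (x : ℝ) : HasDerivAt (gaussCDF μ σ) (gaussPDF μ σ x) x := by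
  have hint : Integrable (gaussPDF μ σ) := by
    rw [gaussPDF_eq_gaussianPDFReal μ hσ]; exact integrable_gaussianPDFReal ..
  exact hasDerivAt_setIntegral_Iic hint (by unfold gaussPDF; fun_prop)

theorem gaussCDF_sub (u : ℝ) : gaussCDF μ σ (μ - u) = 1 - gaussCDF μ σ (μ + u) := by
  have hv : (σ ^ 2).toNNReal ≠ 0 := by simp [hσ.ne']
  have := nullSingletonClass_gaussianReal (μ := μ) hv
  rw [gaussCDF_eq_cdf μ hσ]
  exact cdf_sub_eq_one_sub_cdf_add (by rw [gaussianReal_map_const_sub]; ring_nf) u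

theorem gaussCDF_self : gaussCDF μ σ μ = 1 / 2 := by
  have := gaussCDF_sub μ hσ 0
  rw [sub_zero, add_zero] at this
  linarith

theorem tendsto_gaussCDF_atTop : Tendsto (gaussCDF μ σ) atTop (𝓝 1) := by
  rw [gaussCDF_eq_cdf μ hσ]; exact tendsto_cdf_atTop _

end Gaussian

theorem cauchyPDFReal_eq_div (m : ℝ) (γ : ℝ≥0) (x : ℝ) :
    cauchyPDFReal m γ x = cauchyPDFReal m γ m / (1 + ((x - m) / γ) ^ 2) := by
  simp [cauchyPDFReal_def', div_eq_mul_inv]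

theorem hasDerivAt_cauchyCDF (m : ℝ) {γ : ℝ≥0} (hγ : γ ≠ 0) (x : ℝ) :
    HasDerivAt (cauchyCDF m γ) (cauchyPDFReal m γ x) x := by
  have h : HasDerivAt (cauchyCDF m γ) (1 / π * (1 / (1 + ((x - m) / γ) ^ 2) * (1 / γ))) x :=
    (((hasDerivAt_id x).sub_const m).div_const (γ : ℝ)).arctan.const_mul (1 / π) |>.const_add _
  convert h using 1
  have hγ' : (γ : ℝ) ≠ 0 := NNReal.coe_ne_zero.2 hγ
  rw [cauchyPDFReal_def', NNReal.coe_inv]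
  field_simp

theorem cauchyCDF_self (m lam : ℝ) : cauchyCDF m lam m = 1 / 2 := by
  simp [cauchyCDF]

theorem cauchyCDF_sub (m lam u : ℝ) : cauchyCDF m lam (m - u) = 1 - cauchyCDF m lam (m + u) := by
  simp only [cauchyCDF, sub_sub_cancel_left, add_sub_cancel_left, neg_div, arctan_neg]
  ring

theorem tendsto_cauchyCDF_atTop (m : ℝ) {lam : ℝ} (hlam : 0 < lam) :
    Tendsto (cauchyCDF m lam) atTop (𝓝 1) := by
  have harg : Tendsto (fun x => (x - m) / lam) atTop atTop :=
    (tendsto_atTop_add_const_right _ (-m) tendsto_id).atTop_div_const hlam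
  have h : Tendsto (cauchyCDF m lam) atTop (𝓝 (1 / 2 + 1 / π * (π / 2))) :=
    ((tendsto_arctan_atTop.mono_right nhdsWithin_le_nhds).comp harg).const_mul _ |>.const_add _
  rwa [one_div_mul_eq_div, div_div_cancel_left' pi_ne_zero, ← one_div, add_halves] at h

theorem min_one_le_one_add_mul_exp {b s t : ℝ} (hb : 0 ≤ b) (hs : 0 ≤ s) (hst : s ≤ t) :
    min 1 ((1 + t) * exp (-(b * t))) ≤ (1 + s) * exp (-(b * s)) := by
  have hderiv (r : ℝ) : HasDerivAt (fun r => (1 + r) * exp (-(b * r)))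
      (exp (-(b * r)) * (1 - b * (1 + r))) r :=
    (((hasDerivAt_id' r).const_add 1).fun_mul
      ((hasDerivAt_id' r).const_mul b).fun_neg.exp).congr_deriv (by ring)
  have := min_le_of_hasDerivAt_of_deriv_nonneg_imp (fun r _ => hderiv r)
    (fun y hy z hz hyz h => ?_) ⟨hs, hst⟩
  · simpa using this
  have := nonneg_of_mul_nonneg_right h (exp_pos _)
  exact mul_nonneg (exp_pos _).le (by nlinarith)

theorem cauchyPDFReal_self_le_gaussPDF_self_iff (m : ℝ) {σ : ℝ} (hσ : 0 < σ) {γ : ℝ≥0}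
    (hγ : γ ≠ 0) : cauchyPDFReal m γ m ≤ gaussPDF m σ m ↔ √(2 / π) * σ ≤ γ := by
  have hγ' : 0 < (γ : ℝ) := NNReal.coe_pos.2 (pos_iff_ne_zero.2 hγ)
  have hsqrt : √(2 / π) * π = √(2 * π) := by
    rw [← sqrt_sq pi_pos.le, ← sqrt_mul (by positivity), sqrt_sq pi_pos.le]
    field_simp
  simp only [cauchyPDFReal_def', gaussPDF, sub_self, zero_div, ne_eq, OfNat.ofNat_ne_zero,
    not_false_eq_true, zero_pow, add_zero, inv_one, mul_one, neg_zero, exp_zero, NNReal.coe_inv]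
  rw [← mul_inv, ← one_div, one_div_le_one_div (by positivity) (by positivity), ← hsqrt,
    ← mul_assoc, mul_comm σ, mul_comm π, mul_le_mul_iff_left₀ pi_pos]

theorem cauchyPDFReal_le_gaussPDF_iff (m : ℝ) {σ : ℝ} (hσ : 0 < σ) {γ : ℝ≥0} (hγ : γ ≠ 0)
    (x : ℝ) : cauchyPDFReal m γ x ≤ gaussPDF m σ x ↔ cauchyPDFReal m γ m ≤
      gaussPDF m σ m *
        ((1 + ((x - m) / γ) ^ 2) * exp (-(γ ^ 2 / (2 * σ ^ 2) * ((x - m) / γ) ^ 2))) := by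
  have hγ' : (γ : ℝ) ≠ 0 := NNReal.coe_ne_zero.2 hγ
  have hexp : -(x - m) ^ 2 / (2 * σ ^ 2) = -(γ ^ 2 / (2 * σ ^ 2) * ((x - m) / γ) ^ 2) := by
    field_simp
  rw [cauchyPDFReal_eq_div, gaussPDF_eq_mul_exp, div_le_iff₀ (by positivity), hexp]
  ring_nf

theorem cauchyPDFReal_le_gaussPDF_of_le {m σ : ℝ} (hσ : 0 < σ) {γ : ℝ≥0} (hγ : γ ≠ 0)
    (h₀ : cauchyPDFReal m γ m ≤ gaussPDF m σ m) {y z : ℝ} (hy : m ≤ y) (hyz : y ≤ z)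
    (hz : cauchyPDFReal m γ z ≤ gaussPDF m σ z) : cauchyPDFReal m γ y ≤ gaussPDF m σ y := by
  rw [cauchyPDFReal_le_gaussPDF_iff m hσ hγ] at hz ⊢
  have hG : 0 ≤ gaussPDF m σ m := by unfold gaussPDF; positivity
  have hγ' : 0 < (γ : ℝ) := NNReal.coe_pos.2 (pos_iff_ne_zero.2 hγ)
  calc cauchyPDFReal m γ m
      ≤ gaussPDF m σ m * min 1 ((1 + ((z - m) / γ) ^ 2) *
          exp (-(γ ^ 2 / (2 * σ ^ 2) * ((z - m) / γ) ^ 2))) := by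
        rw [mul_min_of_nonneg _ _ hG, mul_one]
        exact le_min h₀ hz
    _ ≤ _ := by
        gcongr
        refine min_one_le_one_add_mul_exp (by positivity) (sq_nonneg _) ?_
        gcongr

theorem cauchyCDF_le_gaussCDF_of_le {m σ : ℝ} (hσ : 0 < σ) {γ : ℝ≥0} (hγ : γ ≠ 0)
    (h₀ : cauchyPDFReal m γ m ≤ gaussPDF m σ m) {x : ℝ} (hx : m ≤ x) :
    cauchyCDF m γ x ≤ gaussCDF m σ x := by
  set H := fun y => gaussCDF m σ y - cauchyCDF m γ y
  have hH (y : ℝ) : HasDerivAt H (gaussPDF m σ y - cauchyPDFReal m γ y) y :=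
    (hasDerivAt_gaussCDF m hσ y).sub (hasDerivAt_cauchyCDF m hγ y)
  have hH₀ : H m = 0 := by simp [H, gaussCDF_self m hσ, cauchyCDF_self]
  have hHlim : Tendsto H atTop (𝓝 0) := by
    simpa using (tendsto_gaussCDF_atTop m hσ).sub
      (tendsto_cauchyCDF_atTop m (NNReal.coe_pos.2 (pos_iff_ne_zero.2 hγ)))
  have hmin (t : ℝ) (ht : x ≤ t) : min 0 (H t) ≤ H x := hH₀ ▸
    min_le_of_hasDerivAt_of_deriv_nonneg_imp (fun y _ => hH y)
      (fun y hy z hz hyz h => sub_nonneg.2 <|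
        cauchyPDFReal_le_gaussPDF_of_le hσ hγ h₀ hy.1 hyz (sub_nonneg.1 h)) ⟨hx, ht⟩
  have hHx : 0 ≤ H x :=
    le_of_tendsto (by simpa using (tendsto_const_nhds (x := (0 : ℝ))).min hHlim)
      (eventually_atTop.2 ⟨x, hmin⟩)
  exact sub_nonneg.1 hHx

/-- The Cauchy distribution `C(M₀, λ)` overbounds the centrally-aligned Gaussian
distribution `N(M₀, σ)` if and only if `λ ≥ √(2/π)·σ`. -/
theorem cauchy_overbounds_gaussian_iff (M₀ σ lam : ℝ) (hσ : 0 < σ) (hlam : 0 < lam) :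
    ((∀ x ≤ M₀, gaussCDF M₀ σ x ≤ cauchyCDF M₀ lam x) ∧
      (∀ x > M₀, cauchyCDF M₀ lam x ≤ gaussCDF M₀ σ x)) ↔
    lam ≥ Real.sqrt (2 / Real.pi) * σ := by
  lift lam to ℝ≥0 using hlam.le
  have hγ : lam ≠ 0 := by exact_mod_cast hlam.ne'
  rw [ge_iff_le, ← cauchyPDFReal_self_le_gaussPDF_self_iff M₀ hσ hγ]
  constructor
  · rintro ⟨-, hright⟩
    have hH := (hasDerivAt_gaussCDF M₀ hσ M₀).sub (hasDerivAt_cauchyCDF M₀ hγ M₀)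
    have := hH.nonneg_of_forall_lt_le fun x hx => by
      simp only [Pi.sub_apply, gaussCDF_self M₀ hσ, cauchyCDF_self, sub_self, sub_nonneg]
      exact hright x hx
    linarith
  · intro h₀
    refine ⟨fun x hx => ?_, fun x hx => cauchyCDF_le_gaussCDF_of_le hσ hγ h₀ hx.le⟩
    obtain ⟨u, rfl⟩ : ∃ u, x = M₀ - u := ⟨M₀ - x, by ring⟩
    have := cauchyCDF_le_gaussCDF_of_le hσ hγ h₀ (x := M₀ + u) (by linarith)
    rw [gaussCDF_sub M₀ hσ, cauchyCDF_sub]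
    linarith
end

section
/- Let σ > 0 and λ ≥ √2·σ, and define g(u) = (λ/σ)·√(π/2)·exp(−u²/(2σ²))·(1 + u²/λ²) − 1. Then g is strictly increasing on (−∞, 0]. -/
/-! Substituting `t = u²`, which decreases strictly on `(−∞, 0]`, reduces the claim to the strict
decrease of `t ↦ exp (−t/c) · (1 + t/d)` on `[0, ∞)` for `c = 2σ² ≤ d = λ²`. That follows from
`1 + t/d ≤ (1 + s/d)(1 + (t − s)/d) ≤ (1 + s/d)(1 + (t − s)/c) < (1 + s/d) · exp ((t − s)/c)`
for `0 ≤ s < t`. -/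

open Real Set

theorem strictAntiOn_exp_neg_div_mul_one_add_div {c d : ℝ} (hc : 0 < c) (hcd : c ≤ d) :
    StrictAntiOn (fun t : ℝ => exp (-t / c) * (1 + t / d)) (Ici 0) := by
  intro s hs t _ hst
  have hd : 0 < d := hc.trans_le hcd
  have hs' : 0 ≤ s / d := div_nonneg hs hd.le
  have hts : 0 < t - s := sub_pos.mpr hst
  have hgrowth : 1 + t / d < (1 + s / d) * exp ((t - s) / c) :=
    calc 1 + t / d ≤ (1 + s / d) * (1 + (t - s) / d) := by
          have hcross : 0 ≤ s / d * ((t - s) / d) := mul_nonneg hs' (div_nonneg hts.le hd.le)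
          linarith [show (1 + s / d) * (1 + (t - s) / d) = 1 + t / d + s / d * ((t - s) / d) by ring]
      _ ≤ (1 + s / d) * (1 + (t - s) / c) := by gcongr
      _ < (1 + s / d) * exp ((t - s) / c) := by
          gcongr
          linarith [add_one_lt_exp (div_pos hts hc).ne']
  have hsplit : exp (-s / c) = exp (-t / c) * exp ((t - s) / c) := by
    rw [← exp_add]; ring_nf
  calc exp (-t / c) * (1 + t / d) < exp (-t / c) * ((1 + s / d) * exp ((t - s) / c)) := by
        gcongr
    _ = exp (-s / c) * (1 + s / d) := by rw [hsplit]; ring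

/-- If `σ > 0` and `λ ≥ √2·σ`, the ratio function
`g(u) = (λ/σ)·√(π/2)·exp(−u²/(2σ²))·(1 + u²/λ²) − 1` is strictly increasing on `(−∞, 0]`. -/
theorem ratio_strictMonoOn (σ lam : ℝ) (hσ : 0 < σ) (hlam : lam ≥ Real.sqrt 2 * σ) :
    StrictMonoOn
      (fun u : ℝ =>
        (lam / σ) * Real.sqrt (Real.pi / 2) * Real.exp (-u ^ 2 / (2 * σ ^ 2)) *
          (1 + u ^ 2 / lam ^ 2) - 1)
      (Set.Iic 0) := by
  have hlam_pos : 0 < lam := lt_of_lt_of_le (by positivity) hlam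
  have hvar : 2 * σ ^ 2 ≤ lam ^ 2 := by
    calc 2 * σ ^ 2 = (Real.sqrt 2 * σ) ^ 2 := by rw [mul_pow, sq_sqrt zero_le_two]
      _ ≤ lam ^ 2 := by gcongr
  intro u _ v hv huv
  have hsq : v ^ 2 < u ^ 2 := by nlinarith [show v ≤ 0 from hv]
  have hdecay := strictAntiOn_exp_neg_div_mul_one_add_div (by positivity) hvar
    (sq_nonneg v) (sq_nonneg u) hsq
  simp only [mul_assoc] at hdecay ⊢
  gcongr
end

section
/- Let M₀ ∈ ℝ, σ > 0 and λ > 0 with λ ≥ √(2/π)·σ. Then there exists x₀ < M₀ such that f_G(x; M₀, σ) < f_C(x; M₀, λ) for all x < x₀ and f_G(x; M₀, σ) > f_C(x; M₀, λ) for all x with x₀ < x < M₀. -/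
/-- Cauchy PDF with location `m` and scale `lam`. -/
noncomputable def cauchyPDF (m lam x : ℝ) : ℝ :=
  1 / (lam * Real.pi * (1 + ((x - m) / lam) ^ 2))

/-!
With `u = (x - M₀)²`, the logarithm of `gaussPDF / cauchyPDF` is
`φ(u) = log (λπ / (σ√(2π))) + log (1 + u/λ²) - u/(2σ²)`. This function is strictly concave on
`[0, ∞)` and tends to `-∞`, and the hypothesis on `λ` is exactly `φ(0) ≥ 0`. It is also positive
somewhere on `(0, ∞)`: either `φ(0) > 0`, or `φ(0) = 0`, which forces `λ² < 2σ²` and hence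
`φ'(0) > 0`. A strictly concave function with these properties is positive on `(0, u₀)` and
negative on `(u₀, ∞)` for some `u₀ > 0`, and `x₀ = M₀ - √u₀` is the crossing point.
-/

open Real Set Filter

theorem StrictConcaveOn.exists_pos_on_Ioo_neg_on_Ioi {φ : ℝ → ℝ}
    (hφ : StrictConcaveOn ℝ (Ici 0) φ) (h0 : 0 ≤ φ 0) {c : ℝ} (hc : 0 < c) (hφc : 0 < φ c)
    (hlim : Tendsto φ atTop atBot) :
    ∃ u₀, 0 < u₀ ∧ (∀ u ∈ Ioo 0 u₀, 0 < φ u) ∧ ∀ u ∈ Ioi u₀, φ u < 0 := by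
  obtain ⟨B, hφB, hcB⟩ :=
    ((hlim.eventually (eventually_lt_atBot 0)).and (eventually_gt_atTop c)).exists
  have hcont : ContinuousOn φ (Icc c B) :=
    (interior_Ici (a := (0 : ℝ)) ▸ hφ.concaveOn.continuousOn_interior).mono
      fun u hu => hc.trans_le hu.1
  obtain ⟨u₀, hu₀, hφu₀⟩ := intermediate_value_Icc' hcB.le hcont ⟨hφB.le, hφc.le⟩
  have hu₀_pos : 0 < u₀ := hc.trans_le hu₀.1
  refine ⟨u₀, hu₀_pos, fun u hu => ?_, fun u hu => ?_⟩
  · have := hφ.lt_on_openSegment self_mem_Ici hu₀_pos.le hu₀_pos.ne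
      (by rwa [openSegment_eq_Ioo hu₀_pos])
    rwa [hφu₀, min_eq_right h0] at this
  · have hu_pos := hu₀_pos.trans hu
    have := hφ.lt_on_openSegment self_mem_Ici hu_pos.le hu_pos.ne
      (by rw [openSegment_eq_Ioo hu_pos]; exact ⟨hu₀_pos, hu⟩)
    rw [hφu₀, min_lt_iff] at this
    exact this.resolve_left h0.not_gt

noncomputable def gaussCauchyLogRatio (σ lam u : ℝ) : ℝ :=
  log (lam * π / (σ * √(2 * π))) + log (1 + u / lam ^ 2) - u / (2 * σ ^ 2)

lemma gaussCauchyLogRatio_eq_zero_add_log_sub (σ lam u : ℝ) :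
    gaussCauchyLogRatio σ lam u =
      gaussCauchyLogRatio σ lam 0 + log (1 + u / lam ^ 2) - u / (2 * σ ^ 2) := by
  simp [gaussCauchyLogRatio]

lemma cauchyPDF_pos (m : ℝ) {lam : ℝ} (hlam : 0 < lam) (x : ℝ) : 0 < cauchyPDF m lam x := by
  unfold cauchyPDF; positivity

lemma gaussPDF_eq_exp_mul_cauchyPDF (m : ℝ) {σ lam : ℝ} (hσ : 0 < σ) (hlam : 0 < lam) (x : ℝ) :
    gaussPDF m σ x = exp (gaussCauchyLogRatio σ lam ((x - m) ^ 2)) * cauchyPDF m lam x := by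
  have hpos : 0 < 1 + (x - m) ^ 2 / lam ^ 2 := by positivity
  rw [gaussCauchyLogRatio, sub_eq_add_neg, exp_add, exp_add, exp_log (by positivity),
    exp_log hpos, gaussPDF, cauchyPDF, div_pow, ← neg_div]
  field_simp

lemma strictConcaveOn_gaussCauchyLogRatio (σ : ℝ) {lam : ℝ} (hlam : lam ≠ 0) :
    StrictConcaveOn ℝ (Ici 0) (gaussCauchyLogRatio σ lam) := by
  have hlog : StrictConcaveOn ℝ (Ici 0) fun u : ℝ => log (1 + u / lam ^ 2) := by
    refine ⟨convex_Ici 0, fun u (hu : 0 ≤ u) v (hv : 0 ≤ v) huv a b ha hb hab => ?_⟩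
    have hcomb :
        a • (1 + u / lam ^ 2) + b • (1 + v / lam ^ 2) = 1 + (a • u + b • v) / lam ^ 2 := by
      simp only [smul_eq_mul]; field_simp; linear_combination lam ^ 2 * hab
    have := strictConcaveOn_log_Ioi.2 (x := 1 + u / lam ^ 2) (y := 1 + v / lam ^ 2)
      (by simp only [mem_Ioi]; positivity) (by simp only [mem_Ioi]; positivity) (by
        intro h; apply huv; field_simp at h; linarith) ha hb hab
    rwa [hcomb] at this
  refine ((hlog.sub_convexOn ((convexOn_id (convex_Ici 0)).smul
    (inv_nonneg.2 (by positivity : (0 : ℝ) ≤ 2 * σ ^ 2)))).add_const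
    (log (lam * π / (σ * √(2 * π))))).congr fun u _ => ?_
  simp only [gaussCauchyLogRatio, Pi.add_apply, Pi.sub_apply, id, smul_eq_mul]
  ring

lemma tendsto_gaussCauchyLogRatio_atTop {σ lam : ℝ} (hσ : σ ≠ 0) (hlam : lam ≠ 0) :
    Tendsto (gaussCauchyLogRatio σ lam) atTop atBot := by
  -- `log y ≤ t * y - 1 - log t`, with `t` chosen so that `log (1 + u/λ²)` eats half of `u/(2σ²)`
  set t := lam ^ 2 / (4 * σ ^ 2)
  have ht : 0 < t := by positivity
  have hbound : ∀ u ≥ 0, gaussCauchyLogRatio σ lam u ≤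
      log (lam * π / (σ * √(2 * π))) + t - 1 - log t - u / (4 * σ ^ 2) := by
    intro u hu
    have hy : 0 < 1 + u / lam ^ 2 := by positivity
    have h := log_le_sub_one_of_pos (mul_pos ht hy)
    have ht_mul : t * (1 + u / lam ^ 2) = t + u / (4 * σ ^ 2) := by
      simp only [t]; field_simp
    rw [log_mul ht.ne' hy.ne', ht_mul] at h
    rw [gaussCauchyLogRatio]
    have : u / (2 * σ ^ 2) = 2 * (u / (4 * σ ^ 2)) := by field_simp; ring
    linarith
  refine tendsto_atBot_mono' _ ((eventually_ge_atTop 0).mono hbound) ?_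
  exact tendsto_atBot_add_const_left _ _ (tendsto_neg_atTop_atBot.comp
    (tendsto_id.atTop_div_const (by positivity)))

lemma sqrt_two_div_pi_mul_pi : √(2 / π) * π = √(2 * π) := by
  rw [show 2 * π = 2 / π * π ^ 2 by field_simp, sqrt_mul (by positivity), sqrt_sq pi_pos.le]

lemma gaussCauchyLogRatio_zero_nonneg {σ lam : ℝ} (hσ : 0 < σ) (h : √(2 / π) * σ ≤ lam) :
    0 ≤ gaussCauchyLogRatio σ lam 0 := by
  have hle : σ * √(2 * π) ≤ lam * π := by
    rw [← sqrt_two_div_pi_mul_pi]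
    nlinarith [pi_pos]
  simpa [gaussCauchyLogRatio] using log_nonneg ((one_le_div (by positivity)).2 hle)

lemma gaussCauchyLogRatio_zero_pos {σ lam : ℝ} (hσ : 0 < σ) (hlam : 0 < lam)
    (h : 2 * σ ^ 2 ≤ lam ^ 2) : 0 < gaussCauchyLogRatio σ lam 0 := by
  have hsq : (σ * √(2 * π)) ^ 2 < (lam * π) ^ 2 := by
    rw [mul_pow, sq_sqrt (by positivity)]
    nlinarith [pi_gt_three, mul_le_mul_of_nonneg_left h pi_pos.le]
  have hlt : σ * √(2 * π) < lam * π := lt_of_pow_lt_pow_left₀ 2 (by positivity) hsq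
  simpa [gaussCauchyLogRatio] using log_pos ((one_lt_div (by positivity)).2 hlt)

lemma gaussCauchyLogRatio_pos_of_zero_pos {σ lam : ℝ} (hσ : σ ≠ 0)
    (h0 : 0 < gaussCauchyLogRatio σ lam 0) :
    0 < gaussCauchyLogRatio σ lam (σ ^ 2 * gaussCauchyLogRatio σ lam 0) := by
  set a := gaussCauchyLogRatio σ lam 0
  have hlog : 0 ≤ log (1 + σ ^ 2 * a / lam ^ 2) :=
    log_nonneg (le_add_of_nonneg_right (by positivity))
  have : σ ^ 2 * a / (2 * σ ^ 2) = a / 2 := by field_simp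
  rw [gaussCauchyLogRatio_eq_zero_add_log_sub, this]
  linarith

lemma gaussCauchyLogRatio_pos_of_sq_lt {σ lam : ℝ} (hlam : lam ≠ 0)
    (h0 : 0 ≤ gaussCauchyLogRatio σ lam 0) (h : lam ^ 2 < 2 * σ ^ 2) :
    0 < gaussCauchyLogRatio σ lam (2 * σ ^ 2 - lam ^ 2) := by
  have hσ : σ ≠ 0 := by rintro rfl; nlinarith [sq_nonneg lam]
  set r := lam ^ 2 / (2 * σ ^ 2)
  have hr : 0 < r := by positivity
  have hr1 : r < 1 := (div_lt_one (by positivity)).2 h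
  have hlog := log_lt_sub_one_of_pos hr hr1.ne
  have h1 : 1 + (2 * σ ^ 2 - lam ^ 2) / lam ^ 2 = r⁻¹ := by simp only [r]; field_simp; ring
  have h2 : (2 * σ ^ 2 - lam ^ 2) / (2 * σ ^ 2) = 1 - r := by simp only [r]; field_simp
  rw [gaussCauchyLogRatio_eq_zero_add_log_sub, h1, h2, log_inv]
  linarith

lemma exists_gaussCauchyLogRatio_pos {σ lam : ℝ} (hσ : 0 < σ) (hlam : 0 < lam)
    (h : √(2 / π) * σ ≤ lam) : ∃ c, 0 < c ∧ 0 < gaussCauchyLogRatio σ lam c := by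
  rcases lt_or_ge (lam ^ 2) (2 * σ ^ 2) with hsq | hsq
  · exact ⟨_, sub_pos.2 hsq,
      gaussCauchyLogRatio_pos_of_sq_lt hlam.ne' (gaussCauchyLogRatio_zero_nonneg hσ h) hsq⟩
  · have h0 := gaussCauchyLogRatio_zero_pos hσ hlam hsq
    exact ⟨_, by positivity, gaussCauchyLogRatio_pos_of_zero_pos hσ.ne' h0⟩

/-- If `λ ≥ √(2/π)·σ`, there is a crossing point `x₀ < M₀` of the two PDFs:
the Cauchy PDF dominates strictly to its left and the Gaussian PDF dominates
strictly between `x₀` and `M₀`. -/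
theorem cauchy_gauss_pdf_single_crossing (M₀ σ lam : ℝ) (hσ : 0 < σ) (hlam : 0 < lam)
    (h : lam ≥ Real.sqrt (2 / Real.pi) * σ) :
    ∃ x₀ < M₀,
      (∀ x < x₀, gaussPDF M₀ σ x < cauchyPDF M₀ lam x) ∧
      (∀ x, x₀ < x → x < M₀ → cauchyPDF M₀ lam x < gaussPDF M₀ σ x) := by
  obtain ⟨c, hc, hφc⟩ := exists_gaussCauchyLogRatio_pos hσ hlam h
  obtain ⟨u₀, hu₀, hpos, hneg⟩ :=
    (strictConcaveOn_gaussCauchyLogRatio σ hlam.ne').exists_pos_on_Ioo_neg_on_Ioi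
      (gaussCauchyLogRatio_zero_nonneg hσ h) hc hφc
      (tendsto_gaussCauchyLogRatio_atTop hσ.ne' hlam.ne')
  refine ⟨M₀ - √u₀, sub_lt_self _ (sqrt_pos.2 hu₀), fun x hx => ?_, fun x hx₀ hx => ?_⟩
  · have hu : u₀ < (x - M₀) ^ 2 := by
      rw [← neg_sub, neg_sq, ← sqrt_lt' (by linarith [sqrt_nonneg u₀])]
      linarith
    rw [gaussPDF_eq_exp_mul_cauchyPDF M₀ hσ hlam]
    exact mul_lt_of_lt_one_left (cauchyPDF_pos M₀ hlam x) (exp_lt_one_iff.2 (hneg _ hu))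
  · have hu : (x - M₀) ^ 2 ∈ Ioo 0 u₀ := by
      rw [← neg_sub, neg_sq]
      exact ⟨by nlinarith, (lt_sqrt (by linarith)).1 (by linarith)⟩
    rw [gaussPDF_eq_exp_mul_cauchyPDF M₀ hσ hlam]
    exact lt_mul_of_one_lt_left (cauchyPDF_pos M₀ hlam x) (one_lt_exp_iff.2 (hpos _ hu))
end

section
/- Let σ > 0 and λ > 0, and write F_C(x) = F_C(x; 0, λ), f_C(x) = f_C(x; 0, λ), F_G(x) = F_G(x; 0, σ), f_G(x) = f_G(x; 0, σ). If F_G(x) > F_C(x) for all x > 0, then there do not exist x₁ > 0 and x₂ > 0 such that f_G(x₁) = f_C(x₂) and F_G(x₁) + f_G(x₁)·(x₂ − x₁) = F_C(x₂); that is, no line tangent to the Gaussian CDF at a positive point is also tangent to the Cauchy CDF at a positive point. -/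
/-!
On `[0, ∞)` the Gaussian density decreases, so the Gaussian CDF is concave there and lies below
each of its tangent lines at positive points. A line tangent to `F_G` at `x₁ > 0` therefore takes
a value `≥ F_G(x₂) > F_C(x₂)` at every `x₂ > 0`, so it cannot meet the Cauchy CDF there.
-/

open MeasureTheory Set

theorem intervalIntegral.integral_le_mul_sub_of_antitoneOn {f : ℝ → ℝ} {a b : ℝ}
    (hf : AntitoneOn f (uIcc a b)) : ∫ t in a..b, f t ≤ f a * (b - a) := by
  rcases le_total a b with hab | hba
  · have hle : ∫ t in a..b, f t ≤ ∫ _ in a..b, f a :=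
      intervalIntegral.integral_mono_on hab hf.intervalIntegrable intervalIntegrable_const
        fun t ht => hf left_mem_uIcc (Icc_subset_uIcc ht) ht.1
    simpa [mul_comm] using hle
  · have hge : ∫ _ in b..a, f a ≤ ∫ t in b..a, f t :=
      intervalIntegral.integral_mono_on hba intervalIntegrable_const hf.intervalIntegrable.symm
        fun t ht => hf (Icc_subset_uIcc' ht) left_mem_uIcc ht.2
    rw [intervalIntegral.integral_symm]
    simp only [intervalIntegral.integral_const, smul_eq_mul] at hge
    linarith

theorem gaussPDF_integrable (μ : ℝ) {σ : ℝ} (hσ : σ ≠ 0) : Integrable (gaussPDF μ σ) := by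
  have h := ((integrable_exp_neg_mul_sq (b := 1 / (2 * σ ^ 2)) (by positivity)).comp_sub_right μ)
    |>.const_mul (1 / (σ * Real.sqrt (2 * Real.pi)))
  convert h using 2 with x
  unfold gaussPDF
  ring_nf

theorem gaussPDF_antitoneOn (μ : ℝ) {σ : ℝ} (hσ : 0 ≤ σ) : AntitoneOn (gaussPDF μ σ) (Ici μ) := by
  intro s hs t ht hst
  unfold gaussPDF
  gcongr
  exact sub_nonneg.mpr hs

theorem gaussCDF_le_tangent {μ σ x₁ x₂ : ℝ} (hσ : 0 < σ) (h₁ : μ ≤ x₁) (h₂ : μ ≤ x₂) :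
    gaussCDF μ σ x₂ ≤ gaussCDF μ σ x₁ + gaussPDF μ σ x₁ * (x₂ - x₁) := by
  have hint := gaussPDF_integrable μ hσ.ne'
  have hdiff : gaussCDF μ σ x₂ - gaussCDF μ σ x₁ = ∫ t in x₁..x₂, gaussPDF μ σ t := by
    unfold gaussCDF
    exact intervalIntegral.integral_Iic_sub_Iic hint.integrableOn hint.integrableOn
  have hanti : AntitoneOn (gaussPDF μ σ) (uIcc x₁ x₂) :=
    (gaussPDF_antitoneOn μ hσ.le).mono fun _ ht => (le_min h₁ h₂).trans ht.1
  linarith [intervalIntegral.integral_le_mul_sub_of_antitoneOn hanti]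

theorem no_tangential_link_general (σ lam : ℝ) (hσ : 0 < σ)
    (habove : ∀ x > (0 : ℝ), cauchyCDF 0 lam x < gaussCDF 0 σ x) :
    ¬ ∃ x₁ > (0 : ℝ), ∃ x₂ > (0 : ℝ),
        gaussPDF 0 σ x₁ = cauchyPDF 0 lam x₂ ∧
        gaussCDF 0 σ x₁ + gaussPDF 0 σ x₁ * (x₂ - x₁) = cauchyCDF 0 lam x₂ := by
  rintro ⟨x₁, hx₁, x₂, hx₂, -, htangent⟩
  linarith [habove x₂ hx₂, gaussCDF_le_tangent hσ hx₁.le hx₂.le]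

/-- If the zero-centered Gaussian CDF lies strictly above the zero-centered Cauchy
CDF on `(0, ∞)`, then no line tangent to the Gaussian CDF at a positive point is
also tangent to the Cauchy CDF at a positive point. -/
theorem no_tangential_link (σ lam : ℝ) (hσ : 0 < σ) (hlam : 0 < lam)
    (habove : ∀ x > (0 : ℝ), cauchyCDF 0 lam x < gaussCDF 0 σ x) :
    ¬ ∃ x₁ > (0 : ℝ), ∃ x₂ > (0 : ℝ),
        gaussPDF 0 σ x₁ = cauchyPDF 0 lam x₂ ∧
        gaussCDF 0 σ x₁ + gaussPDF 0 σ x₁ * (x₂ - x₁) = cauchyCDF 0 lam x₂ :=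
  no_tangential_link_general σ lam hσ habove
end
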